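/- Define $f: [0,\infty) \to [0,\infty)$ by $f(x) = 1/x^2$ if $x \in [n, n + 1/n]$ for some $n \in \mathbb{N}$, and $f(x) = 0$ otherwise. Then $\int_0^\infty f(x)^{1/2}\,dx < \infty$, and $\operatorname{ess\,sup}_{x \in [\rho/2,\rho], f(x) \neq 0} 1/f(x) \le \rho^2$ for all $\rho \ge 2$, i.e.\ $1/f \le \rho^2$ wherever $f > 0$ on $[\rho/2,\rho]$. -/

import Mathlib

open MeasureTheory Set Classical
open scoped ENNReal NNReal

private def S5 (n : ℕ) : Set ℝ := if 1 ≤ n then Icc (n : ℝ) ((n : ℝ) + 1 / n) else ∅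

private lemma S5_meas (n : ℕ) : MeasurableSet (S5 n) := by
  unfold S5; split_ifs <;> simp [measurableSet_Icc]

private lemma mem_union_S5 (x : ℝ) :
    (∃ n : ℕ, 1 ≤ n ∧ (n : ℝ) ≤ x ∧ x ≤ (n : ℝ) + 1 / (n : ℝ)) ↔ x ∈ ⋃ n, S5 n := by
  simp only [mem_iUnion, S5]
  constructor
  · rintro ⟨n, h1, h2, h3⟩
    exact ⟨n, by rw [if_pos h1]; exact ⟨h2, h3⟩⟩
  · rintro ⟨n, hx⟩
    by_cases h1 : 1 ≤ n
    · rw [if_pos h1] at hx; exact ⟨n, h1, hx.1, hx.2⟩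
    · rw [if_neg h1] at hx; exact absurd hx (notMem_empty x)

private lemma one_le_of_mem_S5 {n : ℕ} {x : ℝ} (hx : x ∈ S5 n) : (1 : ℝ) ≤ x := by
  unfold S5 at hx
  split_ifs at hx with h1
  · calc (1 : ℝ) ≤ n := by exact_mod_cast h1
      _ ≤ x := hx.1
  · exact absurd hx (notMem_empty x)

private lemma lint_S5 (n : ℕ) :
    ∫⁻ x in S5 n, (‖(1 / x : ℝ)‖₊ : ℝ≥0∞) ≤ ENNReal.ofReal (1 / (n : ℝ) ^ 2) := by
  rcases Nat.eq_zero_or_pos n with h0 | h1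
  · subst h0
    simp [S5]
  · have hn : (1 : ℝ) ≤ (n : ℝ) := by exact_mod_cast h1
    have hS : S5 n = Icc (n : ℝ) ((n : ℝ) + 1 / n) := if_pos h1
    have hbound : ∀ x ∈ S5 n, (‖(1 / x : ℝ)‖₊ : ℝ≥0∞) ≤ ENNReal.ofReal (1 / (n : ℝ)) := by
      intro x hx
      have hx1 : (1 : ℝ) ≤ x := one_le_of_mem_S5 hx
      have hxn : (n : ℝ) ≤ x := by rw [hS] at hx; exact hx.1
      have hxpos : (0 : ℝ) < x := lt_of_lt_of_le one_pos hx1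
      have h1x : (0 : ℝ) ≤ 1 / x := by positivity
      rw [← enorm_eq_nnnorm, Real.enorm_eq_ofReal h1x]
      exact ENNReal.ofReal_le_ofReal (by
        apply one_div_le_one_div_of_le (by linarith) hxn)
    calc ∫⁻ x in S5 n, (‖(1 / x : ℝ)‖₊ : ℝ≥0∞)
        ≤ ∫⁻ _ in S5 n, ENNReal.ofReal (1 / (n : ℝ)) :=
          setLIntegral_mono measurable_const hbound
      _ = ENNReal.ofReal (1 / (n : ℝ)) * volume (S5 n) := setLIntegral_const _ _
      _ = ENNReal.ofReal (1 / (n : ℝ)) * ENNReal.ofReal (1 / (n : ℝ)) := by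
          rw [hS, Real.volume_Icc]; congr 1; ring
      _ = ENNReal.ofReal (1 / (n : ℝ) ^ 2) := by
          rw [← ENNReal.ofReal_mul (by positivity)]; congr 1; ring

/-- For `f(x) = 1/x²` on `⋃_{n∈ℕ} [n, n+1/n]` and `0` otherwise,
`∫_0^∞ √f < ∞`, while `1/f(x) ≤ ρ²` wherever `f > 0` on `[ρ/2, ρ]`, for all `ρ ≥ 2`. -/
theorem statement5 (f : ℝ → ℝ)
    (hf : ∀ x : ℝ, 0 ≤ x → f x =
      if ∃ n : ℕ, 1 ≤ n ∧ (n : ℝ) ≤ x ∧ x ≤ (n : ℝ) + 1 / (n : ℝ) then 1 / x ^ 2 else 0) :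
    IntegrableOn (fun x => Real.sqrt (f x)) (Ici (0:ℝ)) ∧
    ∀ ρ : ℝ, 2 ≤ ρ → ∀ x ∈ Icc (ρ/2) ρ, f x ≠ 0 → 1 / f x ≤ ρ ^ 2 := by
  set A : Set ℝ := ⋃ n, S5 n with hA
  have hAmeas : MeasurableSet A := MeasurableSet.iUnion S5_meas
  have hA1 : ∀ x ∈ A, (1 : ℝ) ≤ x := by
    intro x hx
    obtain ⟨n, hn⟩ := mem_iUnion.mp hx
    exact one_le_of_mem_S5 hn
  set F : ℝ → ℝ := A.indicator (fun x => 1 / x) with hF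
  have hFmeas : Measurable F :=
    (measurable_const.div measurable_id).indicator hAmeas
  have hFint : Integrable F (volume.restrict (Ici (0:ℝ))) := by
    refine ⟨hFmeas.aestronglyMeasurable, ?_⟩
    show (∫⁻ x, (‖F x‖₊ : ℝ≥0∞) ∂(volume.restrict (Ici (0:ℝ)))) < ⊤
    calc ∫⁻ x, (‖F x‖₊ : ℝ≥0∞) ∂(volume.restrict (Ici (0:ℝ)))
        ≤ ∫⁻ x, (‖F x‖₊ : ℝ≥0∞) ∂volume := setLIntegral_le_lintegral _ _
      _ = ∫⁻ x in A, (‖(1 / x : ℝ)‖₊ : ℝ≥0∞) ∂volume := by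
          rw [← lintegral_indicator hAmeas]
          congr 1
          ext x
          by_cases hx : x ∈ A
          · simp [hF, indicator_of_mem hx]
          · simp [hF, indicator_of_notMem hx]
      _ ≤ ∑' n : ℕ, ∫⁻ x in S5 n, (‖(1 / x : ℝ)‖₊ : ℝ≥0∞) ∂volume := lintegral_iUnion_le _ _
      _ ≤ ∑' n : ℕ, ENNReal.ofReal (1 / (n : ℝ) ^ 2) := ENNReal.tsum_le_tsum lint_S5
      _ < ⊤ := by
          have hsum : Summable (fun n : ℕ => 1 / (n : ℝ) ^ 2) :=
            Real.summable_one_div_nat_pow.mpr one_lt_two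
          rw [← ENNReal.ofReal_tsum_of_nonneg (fun n => by positivity) hsum]
          exact ENNReal.ofReal_lt_top
  have hFintOn : IntegrableOn F (Ici (0:ℝ)) volume := hFint
  constructor
  · refine hFintOn.congr_fun ?_ measurableSet_Ici
    intro x hx
    have hx0 : (0 : ℝ) ≤ x := hx
    show F x = Real.sqrt (f x)
    rw [hf x hx0]
    by_cases hmem : ∃ n : ℕ, 1 ≤ n ∧ (n : ℝ) ≤ x ∧ x ≤ (n : ℝ) + 1 / (n : ℝ)
    · have hxA : x ∈ A := (mem_union_S5 x).mp hmem
      have hx1 : (1 : ℝ) ≤ x := hA1 x hxA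
      rw [if_pos hmem, hF, indicator_of_mem hxA]
      have : (1 / x ^ 2 : ℝ) = (1 / x) ^ 2 := by ring
      rw [this, Real.sqrt_sq (by positivity)]
    · have hxA : x ∉ A := fun h => hmem ((mem_union_S5 x).mpr h)
      rw [if_neg hmem, hF, indicator_of_notMem hxA, Real.sqrt_zero]
  · intro ρ hρ x hx hfx
    have hx0 : (0 : ℝ) ≤ x := by
      have : (1 : ℝ) ≤ ρ / 2 := by linarith
      linarith [hx.1]
    rw [hf x hx0] at hfx ⊢
    by_cases hmem : ∃ n : ℕ, 1 ≤ n ∧ (n : ℝ) ≤ x ∧ x ≤ (n : ℝ) + 1 / (n : ℝ)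
    · rw [if_pos hmem]
      rw [one_div_one_div]
      exact pow_le_pow_left₀ hx0 hx.2 2
    · rw [if_neg hmem] at hfx
      exact absurd rfl hfx
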